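/- arXiv:2210.16832 — 2 statements merged into one kernel-verified Lean document; each statement's English description precedes it below -/
import Mathlib

section
/- For all s,t ∈ μ_r, v ∈ A_1, and w ∈ A_r: (i) v x ⋄_s (w z_t^δ) = (v ⋄_s w z_t^δ) z_t^δ − (v y ⋄_s w) z_t^δ, and (ii) v y ⋄_s (w z_t^δ) = (v ⋄_s w z_t^δ)(y ⋄_t 1) + (v y ⋄_s w) z_t^δ. -/
open FreeAlgebra

/-- Alphabet of `A_1 = ℚ⟨x,y⟩`. -/
inductive LetA : Type | x : LetA | y : LetA

/-- Alphabet of `A_r = ℚ⟨x, y_s : s ∈ μ_r⟩`; the group `G` plays the role of `μ_r`. -/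
inductive LetR (G : Type) : Type | x : LetR G | y : G → LetR G

/-- `A_1 = ℚ⟨x, y⟩`. -/
abbrev A1 : Type := FreeAlgebra ℚ LetA

/-- `A_r = ℚ⟨x, y_s : s ∈ μ_r⟩`. -/
abbrev Ar (G : Type) : Type := FreeAlgebra ℚ (LetR G)

noncomputable def X1 : A1 := ι ℚ LetA.x
noncomputable def Y1 : A1 := ι ℚ LetA.y

variable {G : Type} [CommGroup G]

noncomputable def Xr : Ar G := ι ℚ LetR.x
noncomputable def Yr (s : G) : Ar G := ι ℚ (LetR.y s)

/-- `z = x + y_1`. -/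
noncomputable def zet : Ar G := Xr + Yr 1

open scoped Classical in
/-- `z_s^δ = x + δ(s) y_s` with `δ(1) = 0`, `δ(s) = 1` otherwise. -/
noncomputable def zdel (s : G) : Ar G := if s = 1 then Xr else Xr + Yr s

/-- The involutive automorphism `φ` of `A_r`: `φ(x) = z`, `φ(y_s) = z_s^δ - z`. -/
noncomputable def phi : Ar G →ₐ[ℚ] Ar G :=
  lift ℚ (fun l => match l with
    | LetR.x => zet
    | LetR.y s => zdel s - zet)

/-- The natural embedding `A_1 → A_r`, `x ↦ x`, `y ↦ y_1`. -/
noncomputable def jm : A1 →ₐ[ℚ] Ar G :=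
  lift ℚ (fun l => match l with
    | LetA.x => Xr
    | LetA.y => Yr 1)

open scoped Classical in
/-- The anti-automorphism `τ` of `A_r`: `τ(x) = y_1`, `τ(y_1) = x`, `τ(y_s) = -y_s` (`s ≠ 1`). -/
noncomputable def tauR : Ar G →ₗ[ℚ] Ar G :=
  (MulOpposite.opLinearEquiv ℚ).symm.toLinearMap ∘ₗ
    (lift ℚ (fun l => match l with
      | LetR.x => MulOpposite.op (Yr 1)
      | LetR.y s => MulOpposite.op (if s = 1 then Xr else -(Yr s)) ) :
        Ar G →ₐ[ℚ] (Ar G)ᵐᵒᵖ).toLinearMap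

/-- The anti-automorphism `τ` of `A_1`: `τ(x) = y`, `τ(y) = x`. -/
noncomputable def tau1 : A1 →ₗ[ℚ] A1 :=
  (MulOpposite.opLinearEquiv ℚ).symm.toLinearMap ∘ₗ
    (lift ℚ (fun l => match l with
      | LetA.x => MulOpposite.op Y1
      | LetA.y => MulOpposite.op X1) : A1 →ₐ[ℚ] A1ᵐᵒᵖ).toLinearMap

/-- `wordP [(a₁,s₁),...,(a_l,s_l)] = x^{a₁} y_{s₁} ⋯ x^{a_l} y_{s_l}`,
i.e. the word `z_{a₁+1, s₁} ⋯ z_{a_l+1, s_l}`. -/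
noncomputable def wordP (L : List (ℕ × G)) : Ar G :=
  (L.map (fun p => Xr ^ p.1 * Yr p.2)).prod

/-- Cumulative-product reindexing of subscripts: this realizes the composition `I ∘ M_s`
on subscript lists, sending `(s₁, s₂, …, s_l)` to `(s s₁, s s₁ s₂, …, s s₁ ⋯ s_l)`. -/
def cumul : G → List (ℕ × G) → List (ℕ × G)
  | _, [] => []
  | g, p :: L => (p.1, g * p.2) :: cumul (g * p.2) L

/-- All the data entering the definition of the diamond products `⋄_s`:
the harmonic product `*`, the maps `ψ_s = φ ∘ I ∘ M_s`, and the family of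
`ℚ`-bilinear diamond products `D s : A_1 × A_r → A_r` (together with the
corestriction `D1` of `⋄_1` to `A_1 × A_1 → A_1`), each characterized by its
defining recursive rules. -/
structure DiamondSetup (G : Type) [CommGroup G] where
  /-- the harmonic product -/
  hst : Ar G →ₗ[ℚ] Ar G →ₗ[ℚ] Ar G
  one_hst : ∀ w, hst 1 w = w
  hst_one : ∀ v, hst v 1 = v
  hst_xr : ∀ v w, hst (v * Xr) w = hst v w * Xr
  hst_xl : ∀ v w, hst v (w * Xr) = hst v w * Xr
  hst_yy : ∀ (v w : Ar G) (s t : G), hst (v * Yr s) (w * Yr t) =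
      hst v (w * Yr t) * Yr s + hst (v * Yr s) w * Yr t + hst v w * (Xr * Yr (s * t))
  /-- the linear automorphisms `ψ_s = φ ∘ I ∘ M_s` -/
  psi : G → (Ar G ≃ₗ[ℚ] Ar G)
  psi_spec : ∀ (s : G) (L : List (ℕ × G)) (a : ℕ),
      psi s (wordP L * Xr ^ a) = phi (wordP (cumul s L) * Xr ^ a)
  /-- the diamond products `⋄_s : A_1 × A_r → A_r` -/
  D : G → A1 →ₗ[ℚ] Ar G →ₗ[ℚ] Ar G
  one_D : ∀ (s : G) (w : Ar G), D s 1 w = w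
  D_one : ∀ (s : G) (v : A1), D s v 1 = psi s (phi (jm v))
  Dxx : ∀ (s : G) (v : A1) (w : Ar G), D s (v * X1) (w * Xr) =
      D s v (w * Xr) * Xr - D s (v * Y1) w * Xr
  Dyx : ∀ (s : G) (v : A1) (w : Ar G), D s (v * Y1) (w * Xr) =
      D s v (w * Xr) * Yr 1 + D s (v * Y1) w * Xr
  Dxy : ∀ (s : G) (v : A1) (w : Ar G), D s (v * X1) (w * Yr 1) =
      D s v (w * Yr 1) * Xr + D s (v * X1) w * Yr 1
  Dyy : ∀ (s : G) (v : A1) (w : Ar G), D s (v * Y1) (w * Yr 1) =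
      D s v (w * Yr 1) * Yr 1 - D s (v * X1) w * Yr 1
  Dxyt : ∀ (s t : G), t ≠ 1 → ∀ (v : A1) (w : Ar G), D s (v * X1) (w * Yr t) =
      D s v (w * Yr t) * Xr + D s v (w * (Xr + Yr t)) * Yr t - D s (v * Y1) w * Yr t
  Dyyt : ∀ (s t : G), t ≠ 1 → ∀ (v : A1) (w : Ar G), D s (v * Y1) (w * Yr t) =
      D s v (w * Yr t) * Yr 1 - D s v (w * (Xr + Yr t)) * Yr t + D s (v * Y1) w * Yr t
  /-- `⋄_1` as a product `A_1 × A_1 → A_1` -/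
  D1 : A1 →ₗ[ℚ] A1 →ₗ[ℚ] A1
  D1_spec : ∀ u v : A1, jm (D1 u v) = D 1 u (jm v)


/-! For `t = 1` we have `z_t^δ = x` and `y ⋄_1 1 = y_1`, so both identities are defining rules of
`⋄_s`. For `t ≠ 1` we have `z_t^δ = x + y_t = z_t`: splitting `w z_t` into `w x + w y_t`, the
`x`-rule and the `y_t`-rule add up to the claim, the cross terms recombining into `v ⋄_s w z_t`.
In both cases `y ⋄_t 1 = ψ_t φ(y_1) = -ψ_t(y_1) = -φ(y_t) = z - z_t^δ`. -/

lemma zdel_one : (zdel 1 : Ar G) = Xr := by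
  simp [zdel]

lemma zdel_of_ne_one {t : G} (ht : t ≠ 1) : (zdel t : Ar G) = Xr + Yr t := by
  simp [zdel, ht]

lemma jm_Y1 : (jm Y1 : Ar G) = Yr 1 := by
  simp [jm, Y1, lift_ι_apply]

lemma phi_Yr (s : G) : (phi (Yr s) : Ar G) = zdel s - zet := by
  simp [phi, Yr, lift_ι_apply]

lemma phi_Yr_one : (phi (Yr 1) : Ar G) = -Yr 1 := by
  rw [phi_Yr, zdel_one, zet]
  abel

namespace DiamondSetup

variable (S : DiamondSetup G)

lemma psi_Yr_one (t : G) : S.psi t (Yr 1) = phi (Yr t) := by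
  simpa [wordP, cumul] using S.psi_spec t [(0, 1)] 0

lemma D_Y1_one (t : G) : S.D t Y1 1 = zet - zdel t := by
  rw [S.D_one, jm_Y1, phi_Yr_one, map_neg, psi_Yr_one, phi_Yr]
  abel

lemma D_mul_X1_mul_zdel (s t : G) (v : A1) (w : Ar G) :
    S.D s (v * X1) (w * zdel t) =
      S.D s v (w * zdel t) * zdel t - S.D s (v * Y1) w * zdel t := by
  by_cases ht : t = 1
  · subst ht
    rw [zdel_one, S.Dxx]
  · rw [zdel_of_ne_one ht, mul_add, map_add, S.Dxx, S.Dxyt s t ht, mul_add, map_add]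
    noncomm_ring

lemma D_mul_Y1_mul_zdel (s t : G) (v : A1) (w : Ar G) :
    S.D s (v * Y1) (w * zdel t) =
      S.D s v (w * zdel t) * (zet - zdel t) + S.D s (v * Y1) w * zdel t := by
  by_cases ht : t = 1
  · subst ht
    rw [zdel_one, zet, add_sub_cancel_left, S.Dyx]
  · rw [zdel_of_ne_one ht, zet, add_sub_add_left_eq_sub, mul_add, map_add, S.Dyx,
      S.Dyyt s t ht, mul_add, map_add]
    noncomm_ring

end DiamondSetup

/-- For all `s, t ∈ μ_r`, `v ∈ A_1`, `w ∈ A_r`: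
(i) `v x ⋄_s (w z_t^δ) = (v ⋄_s w z_t^δ) z_t^δ − (v y ⋄_s w) z_t^δ`, and
(ii) `v y ⋄_s (w z_t^δ) = (v ⋄_s w z_t^δ)(y ⋄_t 1) + (v y ⋄_s w) z_t^δ`. -/
theorem statement3 {G : Type} [CommGroup G] (S : DiamondSetup G)
    (s t : G) (v : A1) (w : Ar G) :
    (S.D s (v * X1) (w * zdel t) =
        S.D s v (w * zdel t) * zdel t - S.D s (v * Y1) w * zdel t) ∧
      (S.D s (v * Y1) (w * zdel t) =
        S.D s v (w * zdel t) * (S.D t Y1 1) + S.D s (v * Y1) w * zdel t) := by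
  rw [S.D_Y1_one]
  exact ⟨S.D_mul_X1_mul_zdel s t v w, S.D_mul_Y1_mul_zdel s t v w⟩
end

section
/- For all s ∈ μ_r and v ∈ A_1: τ(v ⋄_s 1) = τ(v) ⋄_s 1, i.e., τ commutes with the map v ↦ v ⋄_s 1 on A_1. -/
open FreeAlgebra

variable {G : Type} [CommGroup G]

/-!
On a monomial `x^{n₁} y ⋯ x^{n_l} y x^a` with all subscripts `1`, `ψ_s` acts as `φ` after
every subscript is replaced by `s`. Since `φ(A_1) ⊆ A_1`, this makes `v ↦ v ⋄_s 1 = ψ_s φ(v)`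
an algebra homomorphism `A_1 → A_r`, namely `x ↦ z_s^δ`, `y ↦ z - z_s^δ`. As `τ` swaps
`z_s^δ` and `z - z_s^δ`, both `τ(· ⋄_s 1)` and `τ(·) ⋄_s 1` are antihomomorphisms agreeing on
`x` and `y`.
-/

noncomputable def mono1 (L : List ℕ) (a : ℕ) : A1 :=
  (L.map fun n => X1 ^ n * Y1).prod * X1 ^ a

lemma mono1_mul_X1 (L : List ℕ) (a : ℕ) : mono1 L a * X1 = mono1 L (a + 1) := by
  rw [mono1, mono1, mul_assoc, pow_succ]

lemma mono1_mul_Y1 (L : List ℕ) (a : ℕ) : mono1 L a * Y1 = mono1 (L ++ [a]) 0 := by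
  simp [mono1, mul_assoc]

lemma exists_mono1_eq {m : A1} (hm : m ∈ Submonoid.closure (Set.range (ι ℚ))) :
    ∃ L a, m = mono1 L a := by
  induction hm using Submonoid.closure_induction_right with
  | one => exact ⟨[], 0, by simp [mono1]⟩
  | mul_right m _ l hl ih =>
    obtain ⟨L, a, rfl⟩ := ih
    obtain ⟨l, rfl⟩ := hl
    cases l
    · exact ⟨L, a + 1, mono1_mul_X1 L a⟩
    · exact ⟨L ++ [a], 0, mono1_mul_Y1 L a⟩

lemma span_mono1 : Submodule.span ℚ (Set.range fun p : List ℕ × ℕ => mono1 p.1 p.2) = ⊤ := by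
  refine eq_top_iff.2 fun v _ => ?_
  have hv : v ∈ Submodule.span ℚ (Submonoid.closure (Set.range (ι ℚ : LetA → A1)) : Set A1) := by
    rw [← Algebra.adjoin_eq_span, FreeAlgebra.adjoin_range_ι]; trivial
  refine Submodule.span_mono ?_ hv
  rintro m hm
  obtain ⟨L, a, rfl⟩ := exists_mono1_eq hm
  exact ⟨(L, a), rfl⟩

noncomputable def jmAt (s : G) : A1 →ₐ[ℚ] Ar G :=
  lift ℚ fun l => match l with
    | LetA.x => Xr
    | LetA.y => Yr s

lemma map_mono1 {G : Type} (f : A1 →ₐ[ℚ] Ar G) (t : G) (hx : f X1 = Xr) (hy : f Y1 = Yr t)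
    (L : List ℕ) (a : ℕ) : f (mono1 L a) = wordP (L.map fun n => (n, t)) * Xr ^ a := by
  simp [mono1, wordP, map_list_prod, Function.comp_def, hx, hy]

lemma cumul_map_one (s : G) (L : List ℕ) :
    cumul s (L.map fun n => (n, 1)) = L.map fun n => (n, s) := by
  induction L with
  | nil => rfl
  | cons n L ih => simp [cumul, ih]

lemma psi_jm (S : DiamondSetup G) (s : G) (u : A1) : S.psi s (jm u) = phi (jmAt s u) := by
  have hu : u ∈ Submodule.span ℚ _ := span_mono1 ▸ Submodule.mem_top
  induction hu using Submodule.span_induction with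
  | mem u hu =>
    obtain ⟨⟨L, a⟩, rfl⟩ := hu
    rw [map_mono1 jm 1 (by simp [jm, X1]) (by simp [jm, Y1]),
      map_mono1 (jmAt s) s (by simp [jmAt, X1]) (by simp [jmAt, Y1]), S.psi_spec,
      cumul_map_one]
  | zero => simp
  | add u w _ _ hu hw => simp only [map_add, hu, hw]
  | smul c u _ hu => simp only [map_smul, hu]

noncomputable def phi1 : A1 →ₐ[ℚ] A1 :=
  lift ℚ fun l => match l with
    | LetA.x => X1 + Y1
    | LetA.y => -Y1

lemma phi_jm (u : A1) : phi (jm u : Ar G) = jm (phi1 u) := by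
  change (phi.comp jm) u = (jm.comp phi1) u
  congr 1
  ext l
  cases l <;> simp [phi, jm, phi1, X1, Y1, Xr, Yr, zet, zdel]

/-- In terms of `z = x + y`, this is the substitution `z ↦ z`, `y ↦ z - z_s^δ`. -/
noncomputable def diamondOne (s : G) : A1 →ₐ[ℚ] Ar G :=
  lift ℚ fun l => match l with
    | LetA.x => zdel s
    | LetA.y => zet - zdel s

lemma phi_jmAt_phi1 (s : G) (u : A1) : phi (jmAt s (phi1 u)) = diamondOne s u := by
  change ((phi.comp (jmAt s)).comp phi1) u = diamondOne s u
  congr 1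
  ext l
  cases l <;> simp [phi, jmAt, phi1, diamondOne, X1, Y1, Xr, Yr, zet, zdel]

lemma DiamondSetup.D_one_eq_diamondOne (S : DiamondSetup G) (s : G) (v : A1) :
    S.D s v 1 = diamondOne s v := by
  rw [S.D_one, phi_jm, psi_jm, phi_jmAt_phi1]

lemma tauR_mul (a b : Ar G) : tauR (a * b) = tauR b * tauR a := by
  simp [tauR]

lemma tau1_mul (a b : A1) : tau1 (a * b) = tau1 b * tau1 a := by
  simp [tau1]

lemma tau1_X1 : tau1 X1 = Y1 := by
  simp [tau1, X1]

lemma tau1_Y1 : tau1 Y1 = X1 := by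
  simp [tau1, Y1]

lemma tauR_algebraMap (r : ℚ) : tauR (algebraMap ℚ (Ar G) r) = algebraMap ℚ (Ar G) r := by
  simp [tauR]

lemma tau1_algebraMap (r : ℚ) : tau1 (algebraMap ℚ A1 r) = algebraMap ℚ A1 r := by
  simp [tau1]

lemma tauR_apply_eq_apply_tau1 (f : A1 →ₐ[ℚ] Ar G) (hx : tauR (f X1) = f Y1)
    (hy : tauR (f Y1) = f X1) (v : A1) : tauR (f v) = f (tau1 v) := by
  induction v using FreeAlgebra.induction with
  | grade0 r => simp only [AlgHom.commutes, tauR_algebraMap, tau1_algebraMap]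
  | grade1 l =>
    cases l
    · rw [show ι ℚ LetA.x = X1 from rfl, hx, tau1_X1]
    · rw [show ι ℚ LetA.y = Y1 from rfl, hy, tau1_Y1]
  | mul a b ha hb => rw [map_mul, tauR_mul, tau1_mul, map_mul, ha, hb]
  | add a b ha hb => rw [map_add, map_add, ha, hb, map_add, map_add]

lemma tauR_zdel (s : G) : tauR (zdel s : Ar G) = zet - zdel s := by
  by_cases hs : s = 1
  · simp [tauR, zdel, zet, hs, Xr, Yr]
  · simp [tauR, zdel, zet, hs, Xr, Yr]
    abel

lemma tauR_zet : tauR (zet : Ar G) = zet := by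
  simp [tauR, zet, Xr, Yr, add_comm]

lemma tauR_diamondOne (s : G) (v : A1) : tauR (diamondOne s v) = diamondOne s (tau1 v) := by
  refine tauR_apply_eq_apply_tau1 _ ?_ ?_ v
  · simp [diamondOne, X1, Y1, tauR_zdel]
  · simp [diamondOne, X1, Y1, map_sub, tauR_zdel, tauR_zet]

/-- For all `s ∈ μ_r` and `v ∈ A_1`: `τ(v ⋄_s 1) = τ(v) ⋄_s 1`. -/
theorem statement15 {G : Type} [CommGroup G] (S : DiamondSetup G)
    (s : G) (v : A1) :
    tauR (S.D s v 1) = S.D s (tau1 v) 1 := by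
  rw [S.D_one_eq_diamondOne, S.D_one_eq_diamondOne, tauR_diamondOne]
end
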